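/- arXiv:2207.13205 — 2 statements merged into one kernel-verified Lean document; each statement's English description precedes it below -/
import Mathlib

section
/- Let A be the free unital graded algebra over Z/2 generated by a1,...,a6 of degree 1, b1,...,b7 of degree 0, and c1, c2 of degree -1, with differential determined on generators by: ∂a1 = 1 + b7(b3 + c1·a5), ∂a2 = 1 + a5·b6·c2·b1 + b6·b4·b1, ∂a3 = 1 + b1·c1·b6·a6 + b1·b3·b6, ∂a4 = 1 + (b4 + a6·c2)·b7, ∂a5 = 1 + b6·b5, ∂a6 = 1 + b5·b6, ∂b2 = c1·b6·b4 + b3·b6·c2, ∂b3 = c1·(1 + b6·b5), ∂b4 = (1 + b5·b6)·c2, ∂b_i = 0 for i ∈ {1,5,6,7}, ∂c1 = ∂c2 = 0. Then (A, ∂) has exactly two augmentations ε0, ε1 to Z/2, characterized by ε_j(b_i) = 1 for all i ≠ 2 and ε_j(b2) = j for j ∈ {0,1}. -/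
/-!
The Chekanov–Eliashberg DGA over `ℤ/2` of the maximal-tb Legendrian `9_48` knot:
free unital graded algebra on `a1,…,a6` (degree 1), `b1,…,b7` (degree 0), `c1, c2`
(degree -1), with the differential specified below on generators (and extended by
the Leibniz rule).  It has exactly two augmentations `ε0, ε1` to `ℤ/2`, characterized
by `ε_j(b_i) = 1` for all `i ≠ 2` and `ε_j(b2) = j`.
-/

namespace Stmt3

abbrev F := ZMod 2

inductive Gen : Type
  | a1 | a2 | a3 | a4 | a5 | a6
  | b1 | b2 | b3 | b4 | b5 | b6 | b7
  | c1 | c2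

abbrev A := FreeAlgebra F Gen

noncomputable def g (x : Gen) : A := FreeAlgebra.ι F x

def deg : Gen → ℤ
  | .a1 | .a2 | .a3 | .a4 | .a5 | .a6 => 1
  | .b1 | .b2 | .b3 | .b4 | .b5 | .b6 | .b7 => 0
  | .c1 | .c2 => -1

/-- The differential on generators. -/
noncomputable def d : Gen → A
  | .a1 => 1 + g .b7 * (g .b3 + g .c1 * g .a5)
  | .a2 => 1 + g .a5 * g .b6 * g .c2 * g .b1 + g .b6 * g .b4 * g .b1
  | .a3 => 1 + g .b1 * g .c1 * g .b6 * g .a6 + g .b1 * g .b3 * g .b6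
  | .a4 => 1 + (g .b4 + g .a6 * g .c2) * g .b7
  | .a5 => 1 + g .b6 * g .b5
  | .a6 => 1 + g .b5 * g .b6
  | .b2 => g .c1 * g .b6 * g .b4 + g .b3 * g .b6 * g .c2
  | .b3 => g .c1 * (1 + g .b6 * g .b5)
  | .b4 => (1 + g .b5 * g .b6) * g .c2
  | _ => 0

/-- `ε` is an augmentation: a unital algebra map to `ℤ/2` vanishing on (generators of)
nonzero degree with `ε ∘ ∂ = 0`. -/
def IsAug (ε : A →ₐ[F] F) : Prop :=
  (∀ x : Gen, deg x ≠ 0 → ε (g x) = 0) ∧ ∀ x : Gen, ε (d x) = 0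

/-- candidate augmentation values -/
def v (j : F) : Gen → F
  | .b2 => j
  | .b1 | .b3 | .b4 | .b5 | .b6 | .b7 => 1
  | _ => 0

noncomputable def eps (j : F) : A →ₐ[F] F := FreeAlgebra.lift F (v j)

lemma eps_g (j : F) (x : Gen) : eps j (g x) = v j x := by
  simp [eps, g, FreeAlgebra.lift_ι_apply]

lemma isAug_eps (j : F) : IsAug (eps j) := by
  constructor
  · intro x
    cases x <;> simp [deg, eps_g, v]
  · intro x
    cases x <;>
      simp [d, map_add, map_mul, map_one, eps_g, v] <;> decide

lemma mul_eq_one (x y : F) (h : x * y = 1) : x = 1 ∧ y = 1 := by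
  revert h; revert x y; decide

theorem nine48_exactly_two_augmentations :
    {ε : A →ₐ[F] F | IsAug ε}.ncard = 2 ∧
    (∀ ε : A →ₐ[F] F, IsAug ε →
      ε (g .b1) = 1 ∧ ε (g .b3) = 1 ∧ ε (g .b4) = 1 ∧
      ε (g .b5) = 1 ∧ ε (g .b6) = 1 ∧ ε (g .b7) = 1) ∧
    ∀ j : F, ∃ ε : A →ₐ[F] F, IsAug ε ∧ ε (g .b2) = j := by
  have key : ∀ ε : A →ₐ[F] F, IsAug ε →
      ε (g .b1) = 1 ∧ ε (g .b3) = 1 ∧ ε (g .b4) = 1 ∧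
      ε (g .b5) = 1 ∧ ε (g .b6) = 1 ∧ ε (g .b7) = 1 := by
    intro ε ⟨hdeg, hd⟩
    have ha5 : ε (g .a5) = 0 := hdeg _ (by decide)
    have ha6 : ε (g .a6) = 0 := hdeg _ (by decide)
    have hc1 : ε (g .c1) = 0 := hdeg _ (by decide)
    have hc2 : ε (g .c2) = 0 := hdeg _ (by decide)
    have h5 := hd .a5
    simp [d, map_add, map_mul, map_one] at h5
    have h5' : ε (g .b6) * ε (g .b5) = 1 := by
      revert h5; generalize ε (g .b6) * ε (g .b5) = t; revert t; decide
    obtain ⟨hb6, hb5⟩ := mul_eq_one _ _ h5'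
    have h2 := hd .a2
    simp [d, map_add, map_mul, map_one, ha5, hb6] at h2
    have h2' : ε (g .b4) * ε (g .b1) = 1 := by
      revert h2; generalize ε (g .b4) * ε (g .b1) = t; revert t; decide
    obtain ⟨hb4, hb1⟩ := mul_eq_one _ _ h2'
    have h3 := hd .a3
    simp [d, map_add, map_mul, map_one, hc1, hb6, hb1] at h3
    have hb3 : ε (g .b3) = 1 := by revert h3; generalize ε (g .b3) = t; revert t; decide
    have h1 := hd .a1
    simp [d, map_add, map_mul, map_one, hc1, hb3] at h1
    have hb7 : ε (g .b7) = 1 := by revert h1; generalize ε (g .b7) = t; revert t; decide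
    exact ⟨hb1, hb3, hb4, hb5, hb6, hb7⟩
  refine ⟨?_, key, fun j => ⟨eps j, isAug_eps j, by simp [eps_g, v]⟩⟩
  have hset : {ε : A →ₐ[F] F | IsAug ε} = {eps 0, eps 1} := by
    ext ε
    simp only [Set.mem_setOf_eq, Set.mem_insert_iff, Set.mem_singleton_iff]
    constructor
    · intro hε
      obtain ⟨hb1, hb3, hb4, hb5, hb6, hb7⟩ := key ε hε
      have hu : ∀ j, ε (g .b2) = j → ε = eps j := by
        intro j hb2
        apply FreeAlgebra.hom_ext
        funext x
        have : ε (g x) = v j x := by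
          cases x <;>
            first
            | exact hε.1 _ (by decide)
            | assumption
        simpa [g, eps, FreeAlgebra.lift_ι_apply] using this
      rcases (by decide : ∀ t : F, t = 0 ∨ t = 1) (ε (g .b2)) with h | h
      · exact Or.inl (hu 0 h)
      · exact Or.inr (hu 1 h)
    · rintro (rfl | rfl) <;> exact isAug_eps _
  rw [hset]
  rw [Set.ncard_pair]
  intro h
  have := congrArg (fun f : A →ₐ[F] F => f (g .b2)) h
  simp [eps_g, v] at this
end Stmt3
end

section
/- With (A, ∂) the DGA over Z/2 of the Legendrian 9_48 knot as above, and ε0, ε1 its two augmentations (ε_j(b_i)=1 for i≠2, ε_j(b2)=j), the Z/2-linear map K: A → Z/2 determined by K(c1) = 1, K(x) = 0 on all other generators, and the (ε0, ε1)-derivation rule K(x·y) = K(x)·ε1(y) + ε0(x)·K(y), satisfies ε0 - ε1 = K ∘ ∂. Hence ε0 and ε1 are DGA homotopic. -/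
/-!
For the `ℤ/2` Chekanov–Eliashberg DGA of the Legendrian `9_48` knot and its two
augmentations `ε0, ε1` (`ε_j(b_i) = 1` for `i ≠ 2`, `ε_j(b2) = j`), the `ℤ/2`-linear
map `K` with `K(c1) = 1`, `K = 0` on all other generators, satisfying the
`(ε0, ε1)`-derivation rule `K(x·y) = K(x)·ε1(y) + ε0(x)·K(y)`, is a DGA homotopy:
`ε0 - ε1 = K ∘ ∂` (checked on generators, which determines both sides).
-/

namespace Stmt4

abbrev F := ZMod 2

inductive Gen : Type
  | a1 | a2 | a3 | a4 | a5 | a6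
  | b1 | b2 | b3 | b4 | b5 | b6 | b7
  | c1 | c2

abbrev A := FreeAlgebra F Gen

noncomputable def g (x : Gen) : A := FreeAlgebra.ι F x

def deg : Gen → ℤ
  | .a1 | .a2 | .a3 | .a4 | .a5 | .a6 => 1
  | .b1 | .b2 | .b3 | .b4 | .b5 | .b6 | .b7 => 0
  | .c1 | .c2 => -1

noncomputable def d : Gen → A
  | .a1 => 1 + g .b7 * (g .b3 + g .c1 * g .a5)
  | .a2 => 1 + g .a5 * g .b6 * g .c2 * g .b1 + g .b6 * g .b4 * g .b1
  | .a3 => 1 + g .b1 * g .c1 * g .b6 * g .a6 + g .b1 * g .b3 * g .b6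
  | .a4 => 1 + (g .b4 + g .a6 * g .c2) * g .b7
  | .a5 => 1 + g .b6 * g .b5
  | .a6 => 1 + g .b5 * g .b6
  | .b2 => g .c1 * g .b6 * g .b4 + g .b3 * g .b6 * g .c2
  | .b3 => g .c1 * (1 + g .b6 * g .b5)
  | .b4 => (1 + g .b5 * g .b6) * g .c2
  | _ => 0

def IsAug (ε : A →ₐ[F] F) : Prop :=
  (∀ x : Gen, deg x ≠ 0 → ε (g x) = 0) ∧ ∀ x : Gen, ε (d x) = 0

lemma two_mul_one {a b : F} (h : 1 + a * b = 0) : a = 1 ∧ b = 1 := by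
  revert h; revert a b; decide

lemma three_mul_one {a b c : F} (h : 1 + a * b * c = 0) : a = 1 ∧ b = 1 ∧ c = 1 := by
  revert h; revert a b c; decide

lemma aug_vals (ε : A →ₐ[F] F) (h : IsAug ε) :
    ε (g .a1) = 0 ∧ ε (g .a2) = 0 ∧ ε (g .a3) = 0 ∧ ε (g .a4) = 0 ∧
    ε (g .a5) = 0 ∧ ε (g .a6) = 0 ∧ ε (g .c1) = 0 ∧ ε (g .c2) = 0 ∧
    ε (g .b1) = 1 ∧ ε (g .b3) = 1 ∧ ε (g .b4) = 1 ∧ ε (g .b5) = 1 ∧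
    ε (g .b6) = 1 ∧ ε (g .b7) = 1 := by
  obtain ⟨hz, hd⟩ := h
  have ha1 : ε (g .a1) = 0 := hz _ (by decide)
  have ha2 : ε (g .a2) = 0 := hz _ (by decide)
  have ha3 : ε (g .a3) = 0 := hz _ (by decide)
  have ha4 : ε (g .a4) = 0 := hz _ (by decide)
  have ha5 : ε (g .a5) = 0 := hz _ (by decide)
  have ha6 : ε (g .a6) = 0 := hz _ (by decide)
  have hc1 : ε (g .c1) = 0 := hz _ (by decide)
  have hc2 : ε (g .c2) = 0 := hz _ (by decide)
  have e5 := hd .a5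
  simp only [d, map_add, map_mul, map_one] at e5
  obtain ⟨hb6, hb5⟩ := two_mul_one e5
  have e1 := hd .a1
  simp only [d, map_add, map_mul, map_one, hc1, ha5, zero_mul, add_zero] at e1
  obtain ⟨hb7, hb3⟩ := two_mul_one e1
  have e2 := hd .a2
  simp only [d, map_add, map_mul, map_one, ha5, zero_mul, add_zero] at e2
  obtain ⟨hb6', hb4, hb1⟩ := three_mul_one e2
  exact ⟨ha1, ha2, ha3, ha4, ha5, ha6, hc1, hc2, hb1, hb3, hb4, hb5, hb6, hb7⟩

theorem nine48_augmentations_homotopic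
    (ε0 ε1 : A →ₐ[F] F) (h0 : IsAug ε0) (h1 : IsAug ε1)
    (hb0 : ε0 (g .b2) = 0) (hb1 : ε1 (g .b2) = 1)
    (K : A →ₗ[F] F)
    (hKc1 : K (g .c1) = 1)
    (hKgen : ∀ x : Gen, x ≠ .c1 → K (g x) = 0)
    (hKder : ∀ x y : A, K (x * y) = K x * ε1 y + ε0 x * K y) :
    ∀ x : Gen, ε0 (g x) - ε1 (g x) = K (d x) := by
  obtain ⟨A1, A2, A3, A4, A5, A6, C1, C2, B1, B3, B4, B5, B6, B7⟩ := aug_vals ε0 h0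
  obtain ⟨A1', A2', A3', A4', A5', A6', C1', C2', B1', B3', B4', B5', B6', B7'⟩ := aug_vals ε1 h1
  have K1 : K 1 = 0 := by
    have h := hKder 1 1
    simp only [mul_one, map_one, one_mul] at h
    have : ∀ x : F, x = x + x → x = 0 := by decide
    exact this _ h
  have Ka1 : K (g .a1) = 0 := hKgen _ (by intro h; cases h)
  have Ka2 : K (g .a2) = 0 := hKgen _ (by intro h; cases h)
  have Ka3 : K (g .a3) = 0 := hKgen _ (by intro h; cases h)
  have Ka4 : K (g .a4) = 0 := hKgen _ (by intro h; cases h)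
  have Ka5 : K (g .a5) = 0 := hKgen _ (by intro h; cases h)
  have Ka6 : K (g .a6) = 0 := hKgen _ (by intro h; cases h)
  have Kb1 : K (g .b1) = 0 := hKgen _ (by intro h; cases h)
  have Kb2 : K (g .b2) = 0 := hKgen _ (by intro h; cases h)
  have Kb3 : K (g .b3) = 0 := hKgen _ (by intro h; cases h)
  have Kb4 : K (g .b4) = 0 := hKgen _ (by intro h; cases h)
  have Kb5 : K (g .b5) = 0 := hKgen _ (by intro h; cases h)
  have Kb6 : K (g .b6) = 0 := hKgen _ (by intro h; cases h)
  have Kb7 : K (g .b7) = 0 := hKgen _ (by intro h; cases h)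
  have Kc2 : K (g .c2) = 0 := hKgen _ (by intro h; cases h)
  intro x
  cases x <;>
    simp only [d, map_add, map_mul, map_one, map_zero, hKder, K1, Ka1, Ka2, Ka3, Ka4, Ka5, Ka6,
      Kb1, Kb2, Kb3, Kb4, Kb5, Kb6, Kb7, hKc1, Kc2,
      A1, A2, A3, A4, A5, A6, C1, C2, B1, B3, B4, B5, B6, B7, hb0,
      A1', A2', A3', A4', A5', A6', C1', C2', B1', B3', B4', B5', B6', B7', hb1] <;>
    ring_nf <;> decide

end Stmt4
end
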